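/- arXiv:2110.14254 — 4 statements merged into one kernel-verified Lean document; each statement's English description precedes it below -/
import Mathlib

section
/- Consider the update $X_{t+1} = (X_t - \gamma_t G_t)P_t$ where $X_t \in \mathbb{R}^{d\times 3}$, $G_t = (g_t, 0, 0)$ with $g_t \in \mathbb{R}^d$ in the first column, and each $P_t \in \mathbb{R}^{3\times 3}$ satisfies $P_t a = a$ for $a = (\alpha_1\alpha_2, (1-\alpha_1)\alpha_2, 1-\alpha_2)^T$. Then $\theta_t := X_t a$ satisfies $\theta_{t+1} = \theta_t - \gamma_t \alpha_1\alpha_2 g_t$ for all $t$. -/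
open Matrix

theorem stmt_4 (d : ℕ) (α₁ α₂ : ℝ) (γ : ℕ → ℝ) (hγ : ∀ t, 0 < γ t)
    (g : ℕ → Fin d → ℝ)
    (X : ℕ → Matrix (Fin d) (Fin 3) ℝ)
    (G : ℕ → Matrix (Fin d) (Fin 3) ℝ)
    (hG : ∀ t, G t = fun i j => if j = 0 then g t i else 0)
    (P : ℕ → Matrix (Fin 3) (Fin 3) ℝ)
    (a : Fin 3 → ℝ) (ha : a = ![α₁ * α₂, (1 - α₁) * α₂, 1 - α₂])
    (hP : ∀ t, (P t).mulVec a = a)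
    (hupd : ∀ t, X (t + 1) = (X t - γ t • G t) * P t)
    (θ : ℕ → Fin d → ℝ) (hθ : ∀ t, θ t = (X t).mulVec a) :
    ∀ t, θ (t + 1) = θ t - (γ t * α₁ * α₂) • g t := by
  intro t
  have hGa : (G t).mulVec a = (α₁ * α₂) • g t := by
    funext i
    simp [hG, ha, mulVec, dotProduct, Fin.sum_univ_three, mul_comm]
  rw [hθ, hθ, hupd, ← mulVec_mulVec, hP, sub_mulVec, smul_mulVec, hGa,
    smul_smul]
  funext i
  simp [mul_assoc]
end

section
/- Suppose an iterative algorithm produces $(x_t)$ with $\|x_{t+1} - x^*\| \le c\|x_t - x^*\|$ for some $c < 1$. Then the Lookahead wrapper, which given $y_t$ sets $x_{t,0} = y_t$, applies $k$ steps of the inner algorithm to obtain $x_{t,k}$, and sets $y_{t+1} = (1-\alpha)y_t + \alpha x_{t,k}$ with $\alpha \in (0,1]$, satisfies $\|y_{t+1} - x^*\| \le (1 - \alpha(1 - c^k))\|y_t - x^*\|$, and $1 - \alpha(1-c^k) < 1$. -/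
theorem stmt_7 {E : Type*} [NormedAddCommGroup E] [NormedSpace ℝ E]
    (step : E → E) (xs : E) (c : ℝ) (hc0 : 0 ≤ c) (hc : c < 1)
    (hstep : ∀ x, ‖step x - xs‖ ≤ c * ‖x - xs‖)
    (k : ℕ) (hk : 1 ≤ k) (α : ℝ) (hα : α ∈ Set.Ioc (0:ℝ) 1) (y : E) :
    ‖((1 - α) • y + α • (step^[k] y)) - xs‖ ≤ (1 - α * (1 - c ^ k)) * ‖y - xs‖ ∧
    1 - α * (1 - c ^ k) < 1 := by
  obtain ⟨hα0, hα1⟩ := hα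
  have hiter : ∀ n : ℕ, ‖step^[n] y - xs‖ ≤ c ^ n * ‖y - xs‖ := by
    intro n
    induction n with
    | zero => simp
    | succ n ih =>
      rw [Function.iterate_succ_apply']
      calc ‖step (step^[n] y) - xs‖ ≤ c * ‖step^[n] y - xs‖ := hstep _
        _ ≤ c * (c ^ n * ‖y - xs‖) := by
            exact mul_le_mul_of_nonneg_left ih hc0
        _ = c ^ (n + 1) * ‖y - xs‖ := by ring
  have hck : c ^ k < 1 := pow_lt_one₀ hc0 hc (by omega)
  refine ⟨?_, ?_⟩
  · have hdecomp : ((1 - α) • y + α • (step^[k] y)) - xs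
        = (1 - α) • (y - xs) + α • (step^[k] y - xs) := by
      module
    rw [hdecomp]
    calc ‖(1 - α) • (y - xs) + α • (step^[k] y - xs)‖
        ≤ ‖(1 - α) • (y - xs)‖ + ‖α • (step^[k] y - xs)‖ := norm_add_le _ _
      _ = (1 - α) * ‖y - xs‖ + α * ‖step^[k] y - xs‖ := by
          rw [norm_smul, norm_smul, Real.norm_eq_abs, Real.norm_eq_abs,
            abs_of_nonneg (by linarith), abs_of_nonneg (le_of_lt hα0)]
      _ ≤ (1 - α) * ‖y - xs‖ + α * (c ^ k * ‖y - xs‖) := by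
          have := mul_le_mul_of_nonneg_left (hiter k) (le_of_lt hα0)
          linarith
      _ = (1 - α * (1 - c ^ k)) * ‖y - xs‖ := by ring
  · nlinarith
end

section
/- Let $f$ be a convex function with minimum value $f^*$ attained at $x^*$, and suppose an inner algorithm satisfies $f(x_{t+1}) - f^* \le c(f(x_t) - f^*)$ with $c < 1$. Then the Lookahead wrapper with $k$ inner steps and synchronization $y_{t+1} = (1-\alpha)y_t + \alpha x_{t,k}$, $\alpha \in (0,1]$, satisfies $f(y_{t+1}) - f^* \le (1 - \alpha(1-c^k))(f(y_t) - f^*)$. -/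
theorem stmt_8 {E : Type*} [NormedAddCommGroup E] [NormedSpace ℝ E]
    (f : E → ℝ) (hconv : ConvexOn ℝ Set.univ f)
    (xs : E) (fstar : ℝ) (hfs : f xs = fstar) (hmin : ∀ x, fstar ≤ f x)
    (step : E → E) (c : ℝ) (hc0 : 0 ≤ c) (hc : c < 1)
    (hstep : ∀ x, f (step x) - fstar ≤ c * (f x - fstar))
    (k : ℕ) (α : ℝ) (hα : α ∈ Set.Ioc (0:ℝ) 1) (y : E) :
    f ((1 - α) • y + α • (step^[k] y)) - fstar
      ≤ (1 - α * (1 - c ^ k)) * (f y - fstar) := by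
  obtain ⟨hα0, hα1⟩ := hα
  have hiter : f (step^[k] y) - fstar ≤ c ^ k * (f y - fstar) := by
    induction k with
    | zero => simp
    | succ n ih =>
      rw [Function.iterate_succ_apply']
      calc f (step (step^[n] y)) - fstar ≤ c * (f (step^[n] y) - fstar) := hstep _
        _ ≤ c * (c ^ n * (f y - fstar)) := by
            exact mul_le_mul_of_nonneg_left ih hc0
        _ = c ^ (n + 1) * (f y - fstar) := by ring
  have hcx : f ((1 - α) • y + α • (step^[k] y)) ≤ (1 - α) * f y + α * f (step^[k] y) := by
    have := hconv.2 (Set.mem_univ y) (Set.mem_univ (step^[k] y))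
      (by linarith : (0:ℝ) ≤ 1 - α) hα0.le (by ring)
    simpa using this
  nlinarith [hmin y, hmin (step^[k] y)]
end

section
/- Let exchangeable random vectors $v_0, \ldots, v_{r-1} \in \mathbb{R}^d$ and symmetric random matrices $H_0, \ldots, H_{r-1} \in \mathbb{R}^{d\times d}$ satisfy $H_i = \nabla^2 f_i(y_0)$, $v_i = \nabla f_i(y_0)$, with $\frac{1}{r}\sum_i v_i = \nabla f(y_0)$ and $\frac{1}{r}\sum_i H_i = \nabla^2 f(y_0)$ deterministic. Then $\mathbb{E}\big[\sum_{i=0}^{r-1}\sum_{j=0}^{i-1} H_i v_j\big] = \frac{r^2}{4}\nabla\|\nabla f(y_0)\|^2 - \frac{1}{4}\mathbb{E}\big[\sum_{i=0}^{r-1}\nabla\|v_i\|^2\big]$, where $\nabla\|v_i\|^2 = 2H_i v_i$ and $\nabla\|\nabla f(y_0)\|^2 = 2\nabla^2 f(y_0)\nabla f(y_0)$. -/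
/-!
Write `a i j = 𝔼[H_i v_j]`. Summing over the full square `i, j < r` gives
`𝔼[(∑ H_i)(∑ v_j)] = r² ∇²f(y₀) ∇f(y₀)`, since both sums are deterministic. The square splits
into the lower triangle, the diagonal and the upper triangle, and exchangeability makes the
two triangles equal, so the lower triangle is half of the square minus half of the diagonal.
-/

open MeasureTheory Finset Matrix

section Triangle

variable {E : Type*}

theorem Finset.sum_range_sum_range_eq_add_add [AddCommMonoid E] (a : ℕ → ℕ → E) (n : ℕ) :
    ∑ i ∈ range n, ∑ j ∈ range n, a i j =
      ∑ i ∈ range n, ∑ j ∈ range i, a i j + ∑ i ∈ range n, a i i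
        + ∑ i ∈ range n, ∑ j ∈ range i, a j i := by
  induction n with
  | zero => simp
  | succ n ih =>
    simp only [sum_range_succ, sum_add_distrib, ih]
    abel

theorem Finset.sum_range_sum_range_lt_eq_of_symm [AddCommGroup E] [Module ℝ E]
    (a : ℕ → ℕ → E) (n : ℕ) (hsymm : ∀ i j, j < i → i < n → a i j = a j i) :
    ∑ i ∈ range n, ∑ j ∈ range i, a i j =
      (1 / 2 : ℝ) • ∑ i ∈ range n, ∑ j ∈ range n, a i j
        - (1 / 2 : ℝ) • ∑ i ∈ range n, a i i := by
  have hflip :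
      ∑ i ∈ range n, ∑ j ∈ range i, a j i = ∑ i ∈ range n, ∑ j ∈ range i, a i j :=
    sum_congr rfl fun i hi => sum_congr rfl fun j hj =>
      (hsymm i j (mem_range.mp hj) (mem_range.mp hi)).symm
  rw [sum_range_sum_range_eq_add_add, hflip]
  module

end Triangle

theorem eq_smul_of_inv_smul_eq {E : Type*} [AddCommGroup E] [Module ℝ E] {c : ℝ} {x y : E}
    (h : c⁻¹ • x = y) (hx : c = 0 → x = 0) : x = c • y := by
  rcases eq_or_ne c 0 with rfl | hc
  · simp [hx rfl]
  · rw [← h, smul_inv_smul₀ hc]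

theorem MeasureTheory.integral_finsetSum_finsetSum {Ω E ι κ : Type*} [MeasurableSpace Ω]
    {μ : Measure Ω} [NormedAddCommGroup E] [NormedSpace ℝ E] (s : Finset ι) (t : ι → Finset κ)
    (f : ι → κ → Ω → E) (hf : ∀ i ∈ s, ∀ j ∈ t i, Integrable (f i j) μ) :
    ∫ ω, ∑ i ∈ s, ∑ j ∈ t i, f i j ω ∂μ = ∑ i ∈ s, ∑ j ∈ t i, ∫ ω, f i j ω ∂μ := by
  rw [integral_finsetSum _ fun i hi => integrable_finsetSum _ (hf i hi)]
  exact sum_congr rfl fun i hi => integral_finsetSum _ (hf i hi)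

theorem stmt_18_general {Ω : Type*} [MeasurableSpace Ω] (P : Measure Ω) [IsProbabilityMeasure P]
    (d r : ℕ)
    (H : ℕ → Ω → Matrix (Fin d) (Fin d) ℝ)  -- H i ω = ∇²f_i(y₀)(ω)
    (v : ℕ → Ω → Fin d → ℝ)                 -- v i ω = ∇f_i(y₀)(ω)
    (Hbar : Matrix (Fin d) (Fin d) ℝ) (vbar : Fin d → ℝ)
    -- the averages ∇²f(y₀) and ∇f(y₀) are deterministic
    (hHbar : ∀ ω, (r : ℝ)⁻¹ • ∑ i ∈ Finset.range r, H i ω = Hbar)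
    (hvbar : ∀ ω, (r : ℝ)⁻¹ • ∑ i ∈ Finset.range r, v i ω = vbar)
    (hint : ∀ i j, MeasureTheory.Integrable (fun ω => (H i ω).mulVec (v j ω)) P)
    -- exchangeability: E[H_i v_j] is the same for all pairs i ≠ j
    (hexch : ∀ i j i' j', i < r → j < r → i' < r → j' < r → i ≠ j → i' ≠ j' →
      ∫ ω, (H i ω).mulVec (v j ω) ∂P = ∫ ω, (H i' ω).mulVec (v j' ω) ∂P) :
    (∫ ω, ∑ i ∈ Finset.range r, ∑ j ∈ Finset.range i, (H i ω).mulVec (v j ω) ∂P)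
      = ((r : ℝ) ^ 2 / 4) • ((2 : ℝ) • Hbar.mulVec vbar)
        - (1 / 4 : ℝ) • ∫ ω, ∑ i ∈ Finset.range r, (2 : ℝ) • (H i ω).mulVec (v i ω) ∂P := by
  have hsquare : ∀ ω, ∑ i ∈ range r, ∑ j ∈ range r, H i ω *ᵥ v j ω
      = ((r : ℝ) ^ 2) • Hbar *ᵥ vbar := fun ω => by
      have hH := eq_smul_of_inv_smul_eq (hHbar ω) fun h => by simp [Nat.cast_eq_zero.mp h]
      have hv := eq_smul_of_inv_smul_eq (hvbar ω) fun h => by simp [Nat.cast_eq_zero.mp h]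
      simp_rw [← mulVec_sum, ← sum_mulVec, hH, hv, smul_mulVec, mulVec_smul, smul_smul, sq]
  have hsquare_int : ∑ i ∈ range r, ∑ j ∈ range r, ∫ ω, H i ω *ᵥ v j ω ∂P
      = ((r : ℝ) ^ 2) • Hbar *ᵥ vbar := by
    rw [← integral_finsetSum_finsetSum _ _ _ fun i _ j _ => hint i j]
    simp [hsquare]
  have hdiag : ∫ ω, ∑ i ∈ range r, (2 : ℝ) • H i ω *ᵥ v i ω ∂P
      = (2 : ℝ) • ∑ i ∈ range r, ∫ ω, H i ω *ᵥ v i ω ∂P := by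
    simp_rw [← smul_sum]
    rw [integral_smul, integral_finsetSum _ fun i _ => hint i i]
  rw [integral_finsetSum_finsetSum _ _ _ fun i _ j _ => hint i j, hdiag,
    sum_range_sum_range_lt_eq_of_symm _ _ fun i j hji hir =>
      hexch i j j i hir (hji.trans hir) (hji.trans hir) hir hji.ne' hji.ne,
    hsquare_int]
  module

theorem stmt_18 {Ω : Type*} [MeasurableSpace Ω] (P : Measure Ω) [IsProbabilityMeasure P]
    (d r : ℕ) (hr : 1 ≤ r)
    (H : ℕ → Ω → Matrix (Fin d) (Fin d) ℝ)  -- H i ω = ∇²f_i(y₀)(ω)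
    (v : ℕ → Ω → Fin d → ℝ)                 -- v i ω = ∇f_i(y₀)(ω)
    (hsymm : ∀ i ω, (H i ω).IsSymm)
    (Hbar : Matrix (Fin d) (Fin d) ℝ) (vbar : Fin d → ℝ)
    -- the averages ∇²f(y₀) and ∇f(y₀) are deterministic
    (hHbar : ∀ ω, (r : ℝ)⁻¹ • ∑ i ∈ Finset.range r, H i ω = Hbar)
    (hvbar : ∀ ω, (r : ℝ)⁻¹ • ∑ i ∈ Finset.range r, v i ω = vbar)
    (hint : ∀ i j, MeasureTheory.Integrable (fun ω => (H i ω).mulVec (v j ω)) P)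
    -- exchangeability: E[H_i v_j] is the same for all pairs i ≠ j
    (hexch : ∀ i j i' j', i < r → j < r → i' < r → j' < r → i ≠ j → i' ≠ j' →
      ∫ ω, (H i ω).mulVec (v j ω) ∂P = ∫ ω, (H i' ω).mulVec (v j' ω) ∂P) :
    (∫ ω, ∑ i ∈ Finset.range r, ∑ j ∈ Finset.range i, (H i ω).mulVec (v j ω) ∂P)
      = ((r : ℝ) ^ 2 / 4) • ((2 : ℝ) • Hbar.mulVec vbar)
        - (1 / 4 : ℝ) • ∫ ω, ∑ i ∈ Finset.range r, (2 : ℝ) • (H i ω).mulVec (v i ω) ∂P :=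
  stmt_18_general P d r H v Hbar vbar hHbar hvbar hint hexch
end
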